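/- arXiv:0710.1027 — 3 statements merged into one kernel-verified Lean document; each statement's English description precedes it below -/
import Mathlib

section
/- The quaternion algebra (−3, 2)_ℚ (generated by i, j with i² = −3, j² = 2, ji = −ij) is a division algebra over ℚ. -/
/-!
The reduced norm of `x = a + bi + cj + dk` in `(-3, 2)_ℚ` is `a² + 3b² - 2c² - 6d²`, and `x` is
invertible as soon as this norm is nonzero. A rational zero of the norm gives, after clearing
denominators, integers with `a² + 3b² = 2(c² + 3d²)`. Since `2` is not a square modulo `3`,
reducing mod `3` forces `3 ∣ a` and `3 ∣ c`, and then `(b, a/3, d, c/3)` is again a solution.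
Two such steps divide the whole solution by `3`, so infinite descent leaves only the zero
solution.
-/

open Quaternion

namespace QuaternionAlgebra

variable {R : Type*} [CommRing R]

theorem isUnit_of_isUnit_re_mul_star {c₁ c₂ c₃ : R} {a : ℍ[R,c₁,c₂,c₃]}
    (h : IsUnit (a * star a).re) : IsUnit a := by
  have hunit : IsUnit (a * star a) := by
    rw [mul_star_eq_coe, ← coe_algebraMap]
    exact h.map _
  exact (star_comm_self.symm.isUnit_mul_iff.mp hunit).1

theorem re_mul_star_eq {c₁ c₂ : R} (a : ℍ[R,c₁,c₂]) :
    (a * star a).re = a.re ^ 2 - c₁ * a.imI ^ 2 - c₂ * a.imJ ^ 2 + c₁ * c₂ * a.imK ^ 2 := by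
  simp only [re_mul, re_star, imI_star, imJ_star, imK_star]
  ring

end QuaternionAlgebra

theorem Int.eq_zero_of_forall_pow_dvd {p : ℕ} (hp : 1 < p) {x : ℤ}
    (h : ∀ k : ℕ, (p : ℤ) ^ k ∣ x) : x = 0 :=
  Int.eq_zero_of_dvd_of_natAbs_lt_natAbs (h x.natAbs) <| by
    simpa [Int.natAbs_pow] using Nat.lt_pow_self hp

theorem Rat.exists_intCast_eq_mul_of_den_dvd {q : ℚ} {m : ℕ} (h : q.den ∣ m) :
    ∃ z : ℤ, (z : ℚ) = m * q := by
  obtain ⟨k, rfl⟩ := h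
  exact ⟨k * q.num, by push_cast; rw [← Rat.mul_den_eq_num]; ring⟩

namespace Int

variable {p : ℕ} [hp : Fact p.Prime] {n : ℤ}

theorem dvd_of_dvd_sq_sub_mul_sq (hn : ¬IsSquare (n : ZMod p)) {x y : ℤ}
    (h : (p : ℤ) ∣ x ^ 2 - n * y ^ 2) : (p : ℤ) ∣ x ∧ (p : ℤ) ∣ y := by
  simp only [← ZMod.intCast_zmod_eq_zero_iff_dvd] at h ⊢
  push_cast at h
  have hy : (y : ZMod p) = 0 := by
    by_contra hy
    exact hn ⟨x / y, by field_simp; linear_combination -h⟩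
  refine ⟨?_, hy⟩
  rw [hy] at h
  simpa using h

theorem exists_sq_add_mul_sq_descent (hn : ¬IsSquare (n : ZMod p)) {a b c d : ℤ}
    (h : a ^ 2 + p * b ^ 2 = n * (c ^ 2 + p * d ^ 2)) :
    ∃ a' c', a = p * a' ∧ c = p * c' ∧ b ^ 2 + p * a' ^ 2 = n * (d ^ 2 + p * c' ^ 2) := by
  have hdvd : (p : ℤ) ∣ a ^ 2 - n * c ^ 2 := ⟨n * d ^ 2 - b ^ 2, by linear_combination h⟩
  obtain ⟨⟨a', rfl⟩, ⟨c', rfl⟩⟩ := dvd_of_dvd_sq_sub_mul_sq hn hdvd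
  have hp0 : (p : ℤ) ≠ 0 := by exact_mod_cast hp.out.ne_zero
  refine ⟨a', c', rfl, rfl, mul_left_cancel₀ hp0 ?_⟩
  linear_combination h

theorem pow_dvd_of_sq_add_mul_sq_eq (hn : ¬IsSquare (n : ZMod p)) (k : ℕ) :
    ∀ {a b c d : ℤ}, a ^ 2 + p * b ^ 2 = n * (c ^ 2 + p * d ^ 2) →
      (p : ℤ) ^ k ∣ a ∧ (p : ℤ) ^ k ∣ c := by
  induction k with
  | zero => simp
  | succ k ih =>
    intro a b c d h
    obtain ⟨a', c', rfl, rfl, h'⟩ := exists_sq_add_mul_sq_descent hn h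
    obtain ⟨b', d', rfl, rfl, h''⟩ := exists_sq_add_mul_sq_descent hn h'
    obtain ⟨ha, hc⟩ := ih h''
    rw [pow_succ']
    exact ⟨mul_dvd_mul_left _ ha, mul_dvd_mul_left _ hc⟩

theorem eq_zero_of_sq_add_mul_sq_eq (hn : ¬IsSquare (n : ZMod p)) {a b c d : ℤ}
    (h : a ^ 2 + p * b ^ 2 = n * (c ^ 2 + p * d ^ 2)) : a = 0 ∧ b = 0 ∧ c = 0 ∧ d = 0 := by
  have hp1 := hp.out.one_lt
  obtain ⟨a', c', rfl, rfl, h'⟩ := exists_sq_add_mul_sq_descent hn h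
  refine ⟨?_, ?_, ?_, ?_⟩
  · exact eq_zero_of_forall_pow_dvd hp1 fun k => (pow_dvd_of_sq_add_mul_sq_eq hn k h).1
  · exact eq_zero_of_forall_pow_dvd hp1 fun k => (pow_dvd_of_sq_add_mul_sq_eq hn k h').1
  · exact eq_zero_of_forall_pow_dvd hp1 fun k => (pow_dvd_of_sq_add_mul_sq_eq hn k h).2
  · exact eq_zero_of_forall_pow_dvd hp1 fun k => (pow_dvd_of_sq_add_mul_sq_eq hn k h').2

end Int

theorem Rat.eq_zero_of_sq_add_mul_sq_eq {p : ℕ} [Fact p.Prime] {n : ℤ}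
    (hn : ¬IsSquare (n : ZMod p)) {a b c d : ℚ}
    (h : a ^ 2 + p * b ^ 2 = n * (c ^ 2 + p * d ^ 2)) : a = 0 ∧ b = 0 ∧ c = 0 ∧ d = 0 := by
  set m := a.den * b.den * c.den * d.den
  have hm : (m : ℚ) ≠ 0 := by positivity
  obtain ⟨A, hA⟩ : ∃ A : ℤ, (A : ℚ) = m * a :=
    Rat.exists_intCast_eq_mul_of_den_dvd (by simp [m, dvd_mul_of_dvd_left])
  obtain ⟨B, hB⟩ : ∃ B : ℤ, (B : ℚ) = m * b :=
    Rat.exists_intCast_eq_mul_of_den_dvd (by simp [m, dvd_mul_of_dvd_left])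
  obtain ⟨C, hC⟩ : ∃ C : ℤ, (C : ℚ) = m * c :=
    Rat.exists_intCast_eq_mul_of_den_dvd (by simp [m, dvd_mul_of_dvd_left])
  obtain ⟨D, hD⟩ : ∃ D : ℤ, (D : ℚ) = m * d :=
    Rat.exists_intCast_eq_mul_of_den_dvd (dvd_mul_left _ _)
  have hint : A ^ 2 + p * B ^ 2 = n * (C ^ 2 + p * D ^ 2) := by
    have : (A : ℚ) ^ 2 + p * B ^ 2 = n * (C ^ 2 + p * D ^ 2) := by
      rw [hA, hB, hC, hD]
      linear_combination (m : ℚ) ^ 2 * h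
    exact_mod_cast this
  obtain ⟨hA0, hB0, hC0, hD0⟩ := Int.eq_zero_of_sq_add_mul_sq_eq hn hint
  simp_all

/-- The quaternion algebra `(-3, 2)_ℚ` (with `i² = -3`, `j² = 2`, `ji = -ij`)
is a division algebra over `ℚ`: every nonzero element is invertible. -/
theorem stmt_4 : ∀ x : ℍ[ℚ, -3, 2], x ≠ 0 → IsUnit x := by
  intro x hx
  refine QuaternionAlgebra.isUnit_of_isUnit_re_mul_star (isUnit_iff_ne_zero.mpr fun h => hx ?_)
  have hnorm : x.re ^ 2 + (3 : ℕ) * x.imI ^ 2 = (2 : ℤ) * (x.imJ ^ 2 + (3 : ℕ) * x.imK ^ 2) := by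
    rw [QuaternionAlgebra.re_mul_star_eq] at h
    push_cast
    linear_combination h
  obtain ⟨h₁, h₂, h₃, h₄⟩ := Rat.eq_zero_of_sq_add_mul_sq_eq (by decide) hnorm
  exact QuaternionAlgebra.ext h₁ h₂ h₃ h₄
end

section
/- Let p be a prime, q a prime with v_p(q−1) = 2, and r a prime with r ≡ 1 + p² (mod p³) and with r congruent modulo q² to k + q, where k has multiplicative order p² modulo q². Then v_p(r − 1) = 2, v_q(r^p − 1) = 0, and v_q(r^{p²} − 1) = 1. -/
/-!
Since `r ≡ k + q (mod q²)`, the binomial theorem gives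
`r^{p²} ≡ k^{p²} + p² k^{p²-1} q ≡ 1 + p² k^{p²-1} q (mod q²)`, and `q ∤ p² k^{p²-1}` because
`q ∤ k` and `p ≠ q` (a prime never divides `p - 1`, while `v_p(q - 1) = 2`); so `v_q(r^{p²} - 1) = 1`.
If `q ∣ r^p - 1`, then `q ∣ k^p - 1` as `r ≡ k (mod q)`, hence `q² ∣ k^{pq} - 1` and the order
`p²` of `k` modulo `q²` divides `pq`, forcing `p = q`. Finally `r - 1 ≡ p² (mod p³)`.
-/

theorem padicValInt_eq_of_modEq {p a : ℕ} [Fact p.Prime] {n u : ℤ}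
    (h : n ≡ p ^ a * u [ZMOD p ^ (a + 1)]) (hu : ¬ (p : ℤ) ∣ u) : padicValInt p n = a := by
  obtain ⟨t, ht⟩ := h.symm.dvd
  have hn : n = p ^ a * (u + p * t) := by linear_combination ht
  have hunit : ¬ (p : ℤ) ∣ u + p * t := fun hd => hu (by simpa using hd.sub (dvd_mul_right _ t))
  have hp0 : (p : ℤ) ^ a ≠ 0 := pow_ne_zero _ (by exact_mod_cast (Fact.out : p.Prime).ne_zero)
  rw [hn, padicValInt.mul hp0 (by rintro h; exact hunit (h ▸ dvd_zero _)),
    padicValInt.eq_zero_of_not_dvd hunit, ← Nat.cast_pow, padicValInt.of_nat,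
    padicValNat.prime_pow, add_zero]

theorem padicValInt_natCast_pow_sub_one (p : ℕ) {r : ℕ} (n : ℕ) (hr : 0 < r) :
    padicValInt p ((r : ℤ) ^ n - 1) = padicValNat p (r ^ n - 1) := by
  rw [← padicValInt.of_nat, Nat.cast_sub (Nat.one_le_pow _ _ hr), Nat.cast_pow, Nat.cast_one]

theorem padicValNat_sub_one_self (p : ℕ) [Fact p.Prime] : padicValNat p (p - 1) = 0 := by
  have hp := (Fact.out : p.Prime).two_le
  exact padicValNat.eq_zero_of_not_dvd (Nat.not_dvd_of_pos_of_lt (by omega) (by omega))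

theorem orderOf_intCast_dvd_mul_of_dvd_pow_sub_one {q m : ℕ} {a : ℤ}
    (h : (q : ℤ) ∣ a ^ m - 1) : orderOf (a : ZMod (q ^ 2)) ∣ m * q := by
  apply orderOf_dvd_of_pow_eq_one
  rw [← Int.cast_pow, ← Int.cast_one, ZMod.intCast_eq_intCast_iff_dvd_sub, dvd_sub_comm]
  simpa [pow_mul] using dvd_sub_pow_of_dvd_sub h 1

section

variable {q : ℕ} {r k : ℤ}

theorem Int.not_dvd_pow_sub_one_of_modEq_add {p : ℕ} (hp : p.Prime) (hq : q.Prime) (hpq : p ≠ q)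
    (hr : r ≡ k + q [ZMOD q ^ 2]) (hord : orderOf (k : ZMod (q ^ 2)) = p ^ 2) :
    ¬ (q : ℤ) ∣ r ^ p - 1 := by
  intro hdvd
  have hkr : k ≡ r [ZMOD q] :=
    ((hr.of_dvd (dvd_pow_self _ two_ne_zero)).trans Int.add_modEq_right).symm
  have hkp : (q : ℤ) ∣ k ^ p - 1 :=
    Int.modEq_zero_iff_dvd.1 (((hkr.pow p).sub_right 1).trans (Int.modEq_zero_iff_dvd.2 hdvd))
  have hsq := orderOf_intCast_dvd_mul_of_dvd_pow_sub_one hkp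
  rw [hord, sq] at hsq
  exact hpq ((Nat.prime_dvd_prime_iff_eq hp hq).1 (Nat.dvd_of_mul_dvd_mul_left hp.pos hsq))

theorem Int.pow_sub_one_modEq_of_modEq_add {n : ℕ} (hr : r ≡ k + q [ZMOD q ^ 2])
    (hk : k ^ n ≡ 1 [ZMOD q ^ 2]) : r ^ n - 1 ≡ q * (n * k ^ (n - 1)) [ZMOD q ^ 2] := by
  have hbinom : (k + q) ^ n ≡ k ^ n + q * (n * k ^ (n - 1)) [ZMOD q ^ 2] :=
    Int.modEq_iff_dvd.2 (by
      rw [← dvd_neg]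
      convert sq_dvd_add_pow_sub_sub (q : ℤ) k n using 1
      ring)
  calc r ^ n - 1 ≡ (k + q) ^ n - 1 [ZMOD q ^ 2] := (hr.pow n).sub_right 1
    _ ≡ k ^ n + q * (n * k ^ (n - 1)) - 1 [ZMOD q ^ 2] := hbinom.sub_right 1
    _ ≡ 1 + q * (n * k ^ (n - 1)) - 1 [ZMOD q ^ 2] := (hk.add_right _).sub_right 1
    _ = q * (n * k ^ (n - 1)) := by ring

theorem padicValInt_pow_sub_one_of_modEq_add [Fact q.Prime] {n : ℕ}
    (hr : r ≡ k + q [ZMOD q ^ 2]) (hk : k ^ n ≡ 1 [ZMOD q ^ 2])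
    (hn : ¬ (q : ℤ) ∣ n * k ^ (n - 1)) : padicValInt q (r ^ n - 1) = 1 :=
  padicValInt_eq_of_modEq (by simpa using Int.pow_sub_one_modEq_of_modEq_add hr hk) hn

end

/-- Let `p` be a prime, `q` a prime with `v_p(q-1) = 2`, and `r` a prime with
`r ≡ 1 + p² (mod p³)` and `r ≡ k + q (mod q²)` where `k` has multiplicative order
`p²` modulo `q²`. Then `v_p(r-1) = 2`, `v_q(r^p - 1) = 0` and `v_q(r^{p²} - 1) = 1`. -/
theorem stmt_7 (p q r k : ℕ) (hp : p.Prime) (hq : q.Prime) (hr : r.Prime)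
    (hval : padicValNat p (q - 1) = 2)
    (hrp : r ≡ 1 + p ^ 2 [MOD p ^ 3])
    (hk : Nat.Coprime k q) (hord : orderOf (k : ZMod (q ^ 2)) = p ^ 2)
    (hrq : r ≡ k + q [MOD q ^ 2]) :
    padicValNat p (r - 1) = 2 ∧
    padicValNat q (r ^ p - 1) = 0 ∧
    padicValNat q (r ^ (p ^ 2) - 1) = 1 := by
  have := Fact.mk hp
  have := Fact.mk hq
  have hpq : p ≠ q := by
    rintro rfl
    simp [padicValNat_sub_one_self] at hval
  have hrqZ : (r : ℤ) ≡ k + q [ZMOD q ^ 2] := by exact_mod_cast Int.natCast_modEq_iff.2 hrq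
  have hordZ : orderOf ((k : ℤ) : ZMod (q ^ 2)) = p ^ 2 := by rwa [Int.cast_natCast]
  refine ⟨?_, ?_, ?_⟩
  · rw [← pow_one r, ← padicValInt_natCast_pow_sub_one p 1 hr.pos]
    refine padicValInt_eq_of_modEq (u := 1) ?_ (by exact_mod_cast hp.not_dvd_one)
    simpa using (Int.natCast_modEq_iff.2 hrp).sub_right 1
  · rw [← padicValInt_natCast_pow_sub_one q p hr.pos]
    exact padicValInt.eq_zero_of_not_dvd (Int.not_dvd_pow_sub_one_of_modEq_add hp hq hpq hrqZ hordZ)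
  · rw [← padicValInt_natCast_pow_sub_one q _ hr.pos]
    have hkpow : (k : ℤ) ^ p ^ 2 ≡ 1 [ZMOD q ^ 2] := by
      have := pow_orderOf_eq_one ((k : ℤ) : ZMod (q ^ 2))
      rwa [hordZ, ← Int.cast_pow, ← Int.cast_one, ZMod.intCast_eq_intCast_iff] at this
    have hqk : ¬ q ∣ p ^ 2 * k ^ (p ^ 2 - 1) := by
      rw [hq.dvd_mul]
      rintro (h | h)
      · exact hpq ((Nat.prime_dvd_prime_iff_eq hq hp).1 (hq.dvd_of_dvd_pow h)).symm
      · exact hq.coprime_iff_not_dvd.1 hk.symm (hq.dvd_of_dvd_pow h)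
    exact padicValInt_pow_sub_one_of_modEq_add hrqZ hkpow (by exact_mod_cast hqk)
end

section
/- Let G be a finite abelian group, D ≤ G a subgroup, and C ≤ D a subgroup of index at most 2 in D with G/C a 2-group. Suppose G/C = ⟨ρC⟩ × ⟨σC⟩ with ρ ∈ D. Then there exist a subgroup B of C and an element ρ ∈ D such that D = B × ⟨ρ⟩ and C = B × ⟨ρ²⟩. -/
/-!
As `C` has index two, it is the kernel of a character of `D` with values in `ℤ/2`. Write `D` as a
product of cyclic groups `ℤ/p_i^{n_i}` with generators `e_i`; the character is nontrivial only on
generators of `2`-power order, and among those we take `ρ = e_{i₀}` of least order `2^{n₀}`.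
Reducing modulo `2^{n₀}` and adding up the coordinates on which the character is nontrivial gives
a retraction `ψ` of `D` onto `⟨ρ⟩` that does not change the character, so `B = ker ψ` lies in `C`
and is a complement of `⟨ρ⟩`. Since `ρ ∉ C`, an element `b ρ^k` lies in `C` exactly when `k` is
even, whence `C = B × ⟨ρ²⟩`.
-/

open Subgroup

namespace Subgroup

variable {A : Type*}

theorem isCompl_ker_zpowers_of_retraction [Group A] {ψ : A →* A} {ρ : A} (hρ : ψ ρ = ρ)
    (hψ : ψ.range ≤ zpowers ρ) : IsCompl ψ.ker (zpowers ρ) := by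
  have hfix : ∀ x ∈ zpowers ρ, ψ x = x := by
    rintro _ ⟨k, rfl⟩
    simp [hρ]
  refine ⟨disjoint_def.mpr fun hker hx => hfix _ hx ▸ hker, codisjoint_iff.mpr ?_⟩
  refine eq_top_iff.mpr fun v _ => ?_
  have hψv : ψ v ∈ zpowers ρ := hψ ⟨v, rfl⟩
  have hker : v * (ψ v)⁻¹ ∈ ψ.ker := by simp [hfix _ hψv]
  simpa using mul_mem_sup hker hψv

theorem two_dvd_of_zpow_mem_of_index_eq_two [Group A] {C : Subgroup A} (hC : C.index = 2)
    {a : A} (ha : a ∉ C) {k : ℤ} (hk : a ^ k ∈ C) : 2 ∣ k := by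
  rcases Int.emod_two_eq_zero_or_one k with h | h
  · exact Int.dvd_of_emod_eq_zero h
  · have hsplit : a ^ k = (a ^ 2) ^ (k / 2) * a := by
      rw [← zpow_natCast, ← zpow_mul, ← zpow_add_one]
      congr 1
      omega
    rw [hsplit, mul_mem_cancel_left (zpow_mem (sq_mem_of_index_two hC a) _)] at hk
    exact absurd hk ha

theorem sup_zpowers_sq_eq_of_index_eq_two [CommGroup A] {B C : Subgroup A} (hC : C.index = 2)
    {ρ : A} (hρ : ρ ∉ C) (hBC : B ≤ C) (hB : IsCompl B (zpowers ρ)) :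
    B ⊔ zpowers (ρ ^ 2) = C := by
  refine le_antisymm (sup_le hBC (zpowers_le.mpr (sq_mem_of_index_two hC ρ))) fun v hv => ?_
  obtain ⟨b, hb, _, ⟨k, rfl⟩, rfl⟩ := mem_sup.mp (hB.sup_eq_top ▸ mem_top v : v ∈ B ⊔ zpowers ρ)
  obtain ⟨l, rfl⟩ :=
    two_dvd_of_zpow_mem_of_index_eq_two hC hρ ((mul_mem_cancel_left (hBC hb)).mp hv)
  refine mul_mem_sup hb ⟨l, ?_⟩
  simp only [← zpow_natCast, ← zpow_mul]
  norm_num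

theorem ker_le_of_forall_mul_inv_mem [CommGroup A] {ι : Type*} {e : ι → A}
    (he : closure (Set.range e) = ⊤) {ψ : A →* A} {C : Subgroup A}
    (h : ∀ j, e j * (ψ (e j))⁻¹ ∈ C) : ψ.ker ≤ C := by
  have hrange : (MonoidHom.id A / ψ).range ≤ C := by
    rw [MonoidHom.range_eq_map, ← he, MonoidHom.map_closure, closure_le]
    rintro _ ⟨_, ⟨j, rfl⟩, rfl⟩
    simpa [div_eq_mul_inv] using h j
  intro v hv
  simpa [MonoidHom.mem_ker.mp hv] using hrange ⟨v, rfl⟩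

end Subgroup

theorem Multiplicative.mem_zpowers_ofAdd_one {n : ℕ} (x : Multiplicative (ZMod n)) :
    x ∈ zpowers (Multiplicative.ofAdd 1) :=
  ⟨(Multiplicative.toAdd x).cast, by simp [← ofAdd_zsmul]⟩

namespace PiZMod

variable {ι : Type*} [DecidableEq ι] (m : ι → ℕ)

def basisVec (i : ι) : ∀ j, Multiplicative (ZMod (m j)) :=
  Pi.mulSingle i (Multiplicative.ofAdd 1)

variable {m}

theorem mulSingle_mem_zpowers_basisVec (i : ι) (x : Multiplicative (ZMod (m i))) :
    Pi.mulSingle i x ∈ zpowers (basisVec m i) := by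
  rw [basisVec, ← MonoidHom.mulSingle_apply, ← MonoidHom.map_zpowers]
  exact mem_map_of_mem _ (Multiplicative.mem_zpowers_ofAdd_one x)

theorem basisVec_pow_self (i : ι) : basisVec m i ^ m i = 1 := by
  simp [basisVec, ← Pi.mulSingle_pow, ← ofAdd_nsmul]

theorem exists_endomorphism_basisVec (i₀ : ι) (S : Finset ι) (hS : ∀ j ∈ S, m i₀ ∣ m j) :
    ∃ ψ : (∀ j, Multiplicative (ZMod (m j))) →* (∀ j, Multiplicative (ZMod (m j))),
      ψ.range ≤ zpowers (basisVec m i₀) ∧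
      ∀ j, ψ (basisVec m j) = if j ∈ S then basisVec m i₀ else 1 := by
  let F : ∀ j, Multiplicative (ZMod (m j)) →* Multiplicative (ZMod (m i₀)) := fun j =>
    if h : m i₀ ∣ m j then (ZMod.castHom h _).toAddMonoidHom.toMultiplicative else 1
  have hF : ∀ j ∈ S, F j (Multiplicative.ofAdd 1) = Multiplicative.ofAdd 1 := fun j hj => by
    simp only [F, dif_pos (hS j hj)]
    exact congrArg Multiplicative.ofAdd (map_one (ZMod.castHom (hS j hj) _))
  let ψ := (MonoidHom.mulSingle (fun j => Multiplicative (ZMod (m j))) i₀).comp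
    (∏ j ∈ S, (F j).comp (Pi.evalMonoidHom _ j))
  refine ⟨ψ, ?_, fun j => ?_⟩
  · rintro _ ⟨v, rfl⟩
    exact mulSingle_mem_zpowers_basisVec i₀ _
  · have hoff : ∀ k ∈ S, k ≠ j → F k (basisVec m j k) = 1 := fun k _ hk => by
      simp [basisVec, Pi.mulSingle_eq_of_ne hk]
    split_ifs with hj
    · simp only [ψ, MonoidHom.comp_apply, MonoidHom.finsetProd_apply, Pi.evalMonoidHom_apply,
        Finset.prod_eq_single_of_mem j hj hoff]
      simp [basisVec, hF j hj]
    · simp only [ψ, MonoidHom.comp_apply, MonoidHom.finsetProd_apply, Pi.evalMonoidHom_apply,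
        Finset.prod_eq_one fun k hk => hoff k hk (ne_of_mem_of_not_mem hk hj)]
      simp

section Fintype

variable [Fintype ι]

theorem closure_range_basisVec : Subgroup.closure (Set.range (basisVec m)) = ⊤ := by
  refine eq_top_iff.mpr fun v _ => ?_
  rw [← Finset.univ_prod_mulSingle v]
  refine prod_mem fun i _ => ?_
  exact zpowers_le.mpr (Subgroup.subset_closure (Set.mem_range_self i))
    (mulSingle_mem_zpowers_basisVec i (v i))

theorem exists_isCompl_zpowers_pi {p n : ι → ℕ} (hp : ∀ i, (p i).Prime)
    {C : Subgroup (∀ i, Multiplicative (ZMod (p i ^ n i)))} (hC : C.index = 2) :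
    ∃ ρ ∉ C, ∃ B ≤ C, IsCompl B (zpowers ρ) := by
  classical
  set e := basisVec fun i => p i ^ n i
  set S := Finset.univ.filter fun j => e j ∉ C
  have hS : ∀ j, j ∈ S ↔ e j ∉ C := by simp [S]
  have hSne : S.Nonempty := by
    by_contra! hempty
    have hCtop : C = ⊤ := eq_top_iff.mpr <| closure_range_basisVec.symm.le.trans <|
      (closure_le C).mpr <| by
        rintro _ ⟨j, rfl⟩
        simpa [hS, hempty] using hS j
    simp [hCtop] at hC
  have hp2 : ∀ j ∈ S, p j = 2 := fun j hj => by
    have h2 : (2 : ℤ) ∣ ((p j ^ n j : ℕ) : ℤ) :=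
      two_dvd_of_zpow_mem_of_index_eq_two hC ((hS j).mp hj) <| by
        rw [zpow_natCast, basisVec_pow_self]
        exact one_mem C
    exact ((Nat.prime_dvd_prime_iff_eq Nat.prime_two (hp j)).mp
      (Nat.prime_two.dvd_of_dvd_pow (Int.natCast_dvd_natCast.mp h2))).symm
  -- Minimality of `n i₀` is what makes reduction mod `2 ^ n i₀` defined on every coordinate in `S`.
  obtain ⟨i₀, hi₀, hmin⟩ := S.exists_min_image n hSne
  obtain ⟨ψ, hψrange, hψ⟩ :=
    exists_endomorphism_basisVec (m := fun i => p i ^ n i) i₀ S fun j hj => by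
      simpa only [hp2 j hj, hp2 i₀ hi₀] using Nat.pow_dvd_pow 2 (hmin j hj)
  refine ⟨e i₀, (hS i₀).mp hi₀, ψ.ker,
    ker_le_of_forall_mul_inv_mem closure_range_basisVec fun j => ?_,
    isCompl_ker_zpowers_of_retraction (by rw [hψ, if_pos hi₀]) hψrange⟩
  rw [hψ]
  split_ifs with hj
  · rw [mul_mem_iff_of_index_two hC, inv_mem_iff]
    exact iff_of_false ((hS j).mp hj) ((hS i₀).mp hi₀)
  · simpa [hS] using hj

end Fintype

end PiZMod

theorem CommGroup.exists_isCompl_zpowers_of_index_eq_two {A : Type*} [CommGroup A] [Finite A]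
    {C : Subgroup A} (hC : C.index = 2) : ∃ ρ ∉ C, ∃ B ≤ C, IsCompl B (zpowers ρ) := by
  classical
  obtain ⟨ι, _, p, hp, n, ⟨e⟩⟩ := AddCommGroup.equiv_directSum_zmod_of_finite (Additive A)
  let E : A ≃* ∀ i, Multiplicative (ZMod (p i ^ n i)) :=
    MulEquiv.toAdditive.symm <| e.trans <|
      (DirectSum.addEquivProd _).trans (MulEquiv.piMultiplicative _).toAdditiveRight
  obtain ⟨ρ, hρ, B, hBC, hB⟩ := PiZMod.exists_isCompl_zpowers_pi hp
    (C := C.map (E : A →* ∀ i, Multiplicative (ZMod (p i ^ n i)))) (by rwa [index_map_equiv])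
  refine ⟨E.symm ρ, fun h => hρ (mem_map_equiv.mpr h), B.map (E.symm : _ →* A), ?_, ?_⟩
  · rw [map_le_iff_le_comap, ← map_equiv_eq_comap_symm]
    exact hBC
  · simpa [MonoidHom.map_zpowers] using (MulEquiv.mapSubgroup E.symm).isCompl hB

theorem CommGroup.exists_complement_zpowers_of_index_le_two {A : Type*} [CommGroup A] [Finite A]
    {C : Subgroup A} (hC : C.index ≤ 2) : ∃ B ≤ C, ∃ ρ : A,
      IsCompl B (zpowers ρ) ∧ B ⊔ zpowers (ρ ^ 2) = C ∧ B ⊓ zpowers (ρ ^ 2) = ⊥ := by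
  rcases (by have := C.index_ne_zero_of_finite; omega : C.index = 1 ∨ C.index = 2) with h1 | h2
  · rw [index_eq_one] at h1
    subst h1
    exact ⟨⊤, le_rfl, 1, by simpa using isCompl_top_bot, by simp, by simp⟩
  · obtain ⟨ρ, hρ, B, hBC, hB⟩ := exists_isCompl_zpowers_of_index_eq_two h2
    refine ⟨B, hBC, ρ, hB, sup_zpowers_sq_eq_of_index_eq_two h2 hρ hBC hB, ?_⟩
    exact disjoint_iff.mp (hB.disjoint.mono_right (zpowers_le.mpr (pow_mem (mem_zpowers ρ) 2)))

theorem stmt_9_general (G : Type) [CommGroup G] [Fintype G] (D C : Subgroup G)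
    (hCD : C ≤ D) (hidx : C.relIndex D ≤ 2) :
    ∃ B : Subgroup G, B ≤ C ∧ ∃ ρ' ∈ D,
      (B ⊔ zpowers ρ' = D ∧ B ⊓ zpowers ρ' = ⊥) ∧
      (B ⊔ zpowers (ρ' ^ 2) = C ∧ B ⊓ zpowers (ρ' ^ 2) = ⊥) := by
  obtain ⟨B, hBC, ρ, hB, hsup, hinf⟩ :=
    CommGroup.exists_complement_zpowers_of_index_le_two (C := C.subgroupOf D) hidx
  have hzpowers : ∀ x : D, zpowers (x : G) = (zpowers x).map D.subtype := fun x =>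
    (MonoidHom.map_zpowers D.subtype x).symm
  have hC : (C.subgroupOf D).map D.subtype = C := by
    rw [subgroupOf_map_subtype, inf_eq_left.mpr hCD]
  refine ⟨B.map D.subtype, hC ▸ map_mono hBC, ρ, ρ.2, ?_⟩
  rw [← SubgroupClass.coe_pow, hzpowers, hzpowers, ← Subgroup.map_sup, ← Subgroup.map_sup,
    ← map_inf _ _ _ D.subtype_injective, ← map_inf _ _ _ D.subtype_injective, hB.sup_eq_top,
    hB.inf_eq_bot, hsup, hinf, hC, Subgroup.map_bot, ← MonoidHom.range_eq_map, range_subtype]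
  exact ⟨⟨rfl, rfl⟩, rfl, rfl⟩

/-- Let `G` be a finite abelian group, `D ≤ G` and `C ≤ D` with `[D : C] ≤ 2`, with
`G/C` a `2`-group and `G/C = ⟨ρC⟩ × ⟨σC⟩` for some `ρ ∈ D`. Then there exist a
subgroup `B ≤ C` and an element `ρ' ∈ D` such that `D = B × ⟨ρ'⟩` and
`C = B × ⟨ρ'²⟩` (internal direct products). -/
theorem stmt_9 (G : Type) [CommGroup G] [Fintype G] (D C : Subgroup G)
    (hCD : C ≤ D) (hidx : C.relIndex D ≤ 2)
    (h2 : IsPGroup 2 (G ⧸ C))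
    (ρ σ : G) (hρD : ρ ∈ D)
    (hgen : zpowers ((ρ : G ⧸ C)) ⊔ zpowers ((σ : G ⧸ C)) = ⊤)
    (hdisj : zpowers ((ρ : G ⧸ C)) ⊓ zpowers ((σ : G ⧸ C)) = ⊥) :
    ∃ B : Subgroup G, B ≤ C ∧ ∃ ρ' ∈ D,
      (B ⊔ zpowers ρ' = D ∧ B ⊓ zpowers ρ' = ⊥) ∧
      (B ⊔ zpowers (ρ' ^ 2) = C ∧ B ⊓ zpowers (ρ' ^ 2) = ⊥) :=
  stmt_9_general G D C hCD hidx
end
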